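/- Let Γ be a countable discrete group with a proper length function ℓ and balls B_k := {γ : ℓ(γ) ≤ k}, let ρ : Γ ↷ (X,ν) be a measurable action on a probability space, and let P_X be the averaging projection on L²(X,ν). Then ρ is asymptotically expanding in measure if and only if P_X is ρ-quasi-local. -/

import Mathlib

open MeasureTheory ENNReal Filter

noncomputable section

/-- The operator norm of the compression `χ_A T χ_C` of an operator
`T ∈ 𝔅(L²(X,ν))`, computed as the supremum of `‖χ_A (T f)‖` over all `f` in the unit
ball that are (a.e.) supported in `C`. -/
def cutNorm {X : Type*} [MeasurableSpace X] {ν : Measure X}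
    (T : Lp ℝ 2 ν →L[ℝ] Lp ℝ 2 ν) (A C : Set X) : ℝ :=
  sSup ((fun f : Lp ℝ 2 ν => (eLpNorm (A.indicator (fun x => T f x)) 2 ν).toReal) ''
    { f : Lp ℝ 2 ν | ‖f‖ ≤ 1 ∧ ∀ᵐ x ∂ν, x ∉ C → f x = 0 })

/-- `B_k · A = ⋃_{ℓ(γ) ≤ k} γ·A`, the translate of `A ⊆ X` by the ball of radius `k`
of the length function `ℓ`. -/
def ballSmul {Γ X : Type*} [Group Γ] [MulAction Γ X] (ℓ : Γ → ℕ) (k : ℕ)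
    (A : Set X) : Set X :=
  ⋃ γ ∈ {γ : Γ | ℓ γ ≤ k}, (fun x => γ • x) '' A

/-- An operator `T ∈ 𝔅(L²(X,ν))` is `ρ`-quasi-local if for every `ε > 0` there is
`k ∈ ℕ` such that `‖χ_A T χ_C‖ < ε` whenever `A, C` are measurable with
`ν((B_k·A) ∩ C) = 0`. -/
def QuasiLocal {Γ X : Type*} [Group Γ] [MulAction Γ X] [MeasurableSpace X]
    (ℓ : Γ → ℕ) (ν : Measure X) (T : Lp ℝ 2 ν →L[ℝ] Lp ℝ 2 ν) : Prop :=
  ∀ ε : ℝ, 0 < ε → ∃ k : ℕ, ∀ A C : Set X, MeasurableSet A → MeasurableSet C →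
    ν (ballSmul ℓ k A ∩ C) = 0 → cutNorm T A C < ε

/-- An operator `T ∈ 𝔅(L²(X,ν))` has finite `ρ`-propagation if there is `k ∈ ℕ` such
that `χ_A T χ_C = 0` whenever `A, C` are measurable with `ν((B_k·A) ∩ C) = 0`; this is
expressed by saying that `T f` vanishes a.e. on `A` whenever `f` vanishes a.e. off
`C`. -/
def FinitePropagation {Γ X : Type*} [Group Γ] [MulAction Γ X] [MeasurableSpace X]
    (ℓ : Γ → ℕ) (ν : Measure X) (T : Lp ℝ 2 ν →L[ℝ] Lp ℝ 2 ν) : Prop :=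
  ∃ k : ℕ, ∀ A C : Set X, MeasurableSet A → MeasurableSet C →
    ν (ballSmul ℓ k A ∩ C) = 0 →
    ∀ f : Lp ℝ 2 ν, (∀ᵐ x ∂ν, x ∉ C → f x = 0) → (∀ᵐ x ∂ν, x ∈ A → T f x = 0)

/-- The action `ρ : Γ ↷ (X,ν)` on a probability space is asymptotically expanding in
measure: there are `c̲ : (0,1/2] → ℝ_{>0}` and `k̲ : (0,1/2] → ℕ` such that every
measurable `A` with `α ≤ ν(A) ≤ 1/2` satisfies `ν(B_{k̲(α)}·A) > (1+c̲(α))·ν(A)`. -/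
def AsymptoticallyExpanding {Γ X : Type*} [Group Γ] [MulAction Γ X] [MeasurableSpace X]
    (ℓ : Γ → ℕ) (ν : Measure X) : Prop :=
  ∃ (c : ℝ → ℝ) (k : ℝ → ℕ), (∀ α ∈ Set.Ioc (0 : ℝ) (1/2), 0 < c α) ∧
    ∀ α ∈ Set.Ioc (0 : ℝ) (1/2), ∀ A : Set X, MeasurableSet A →
      ENNReal.ofReal α ≤ ν A → ν A ≤ 1/2 →
      (1 + ENNReal.ofReal (c α)) * ν A < ν (ballSmul ℓ (k α) A)


/-!
For the averaging projection `‖χ_A P χ_C‖ = √(ν(A) ν(C))`, so `P` is quasi-local iff for every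
`α > 0` there is `k` such that `ν(A) ≥ α` forces `ν((B_k · A)ᶜ)` to be small. Expansion gives
this by iteration: boundedly many steps push `B_{n k} · A` above measure `1/2`, and the same
applied to the complement of a further neighbourhood shows that this complement has measure
`< α`. Conversely, small complements make `ν(B_k · A)` close to `1`, hence larger than
`(3/2) ν(A)` once `ν(A) ≤ 1/2`.
-/

lemma pow_mul_le_of_mul_le_succ {M : Type*} [CommMonoid M] [Preorder M] [MulLeftMono M]
    {u : ℕ → M} (hu : Monotone u) {q b : M} (hstep : ∀ n, u n ≤ b → q * u n ≤ u (n + 1)) :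
    ∀ n, u n ≤ b → q ^ n * u 0 ≤ u n
  | 0, _ => by rw [pow_zero, one_mul]
  | n + 1, hn =>
    have hn' : u n ≤ b := (hu n.le_succ).trans hn
    calc q ^ (n + 1) * u 0 = q * (q ^ n * u 0) := by rw [pow_succ', mul_assoc]
      _ ≤ q * u n := mul_le_mul_right (pow_mul_le_of_mul_le_succ hu hstep n hn') q
      _ ≤ u (n + 1) := hstep n hn'

section BallSmul

variable {Γ X : Type*} [Group Γ] [MulAction Γ X] {ℓ : Γ → ℕ}

lemma subset_ballSmul (hl1 : ℓ 1 = 0) (k : ℕ) (A : Set X) : A ⊆ ballSmul ℓ k A :=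
  fun x hx => Set.mem_biUnion (show ℓ 1 ≤ k by simp [hl1]) ⟨x, hx, one_smul Γ x⟩

lemma ballSmul_subset_ballSmul {j k : ℕ} (hjk : j ≤ k) (A : Set X) :
    ballSmul ℓ j A ⊆ ballSmul ℓ k A :=
  Set.biUnion_subset_biUnion_left fun _ hγ => le_trans hγ hjk

lemma ballSmul_ballSmul_subset (hlsub : ∀ γ₁ γ₂ : Γ, ℓ (γ₁ * γ₂) ≤ ℓ γ₁ + ℓ γ₂)
    (j k : ℕ) (A : Set X) : ballSmul ℓ j (ballSmul ℓ k A) ⊆ ballSmul ℓ (j + k) A := by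
  rintro _ ⟨_, ⟨γ, rfl⟩, _, ⟨hγ, rfl⟩, _, hy, rfl⟩
  obtain ⟨δ, hδ, a, ha, rfl⟩ := Set.mem_iUnion₂.1 hy
  exact Set.mem_biUnion ((hlsub γ δ).trans (add_le_add hγ hδ)) ⟨a, ha, mul_smul γ δ a⟩

lemma ballSmul_compl_ballSmul_subset (hlinv : ∀ γ : Γ, ℓ γ⁻¹ = ℓ γ) (k : ℕ) (A : Set X) :
    ballSmul ℓ k (ballSmul ℓ k A)ᶜ ⊆ Aᶜ := by
  intro x hx hxA
  obtain ⟨γ, hγ, y, hy, rfl⟩ := Set.mem_iUnion₂.1 hx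
  exact hy (Set.mem_biUnion (show ℓ γ⁻¹ ≤ k from (hlinv γ).trans_le hγ)
    ⟨γ • y, hxA, inv_smul_smul γ y⟩)

lemma measurableSet_ballSmul [Countable Γ] [MeasurableSpace X]
    (hmeas : ∀ γ : Γ, Measurable (fun x : X => γ • x)) (k : ℕ) {A : Set X}
    (hA : MeasurableSet A) : MeasurableSet (ballSmul ℓ k A) :=
  MeasurableSet.biUnion (Set.to_countable _) fun γ _ => by
    rw [Set.image_smul, ← Set.preimage_smul_inv]
    exact hmeas γ⁻¹ hA

end BallSmul

section Expansion

variable {Γ X : Type*} [Group Γ] [MulAction Γ X] [MeasurableSpace X]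

def IsExpandingAt (ℓ : Γ → ℕ) (ν : Measure X) (α c : ℝ) (k : ℕ) : Prop :=
  ∀ A : Set X, MeasurableSet A → ENNReal.ofReal α ≤ ν A → ν A ≤ 1 / 2 →
    (1 + ENNReal.ofReal c) * ν A < ν (ballSmul ℓ k A)

variable [Countable Γ] {ℓ : Γ → ℕ} (hl1 : ℓ 1 = 0) (hlsub : ∀ γ₁ γ₂ : Γ, ℓ (γ₁ * γ₂) ≤ ℓ γ₁ + ℓ γ₂)
  (hmeas : ∀ γ : Γ, Measurable (fun x : X => γ • x)) {ν : Measure X} {α c : ℝ} {k : ℕ}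
  (hexp : IsExpandingAt ℓ ν α c k) (hα : 0 < α) (hc : 0 < c)
include hl1 hlsub hmeas hexp hα hc

lemma exists_half_lt_measure_ballSmul :
    ∃ N : ℕ, ∀ A : Set X, MeasurableSet A → ENNReal.ofReal α ≤ ν A →
      1 / 2 < ν (ballSmul ℓ N A) := by
  set q := 1 + ENNReal.ofReal c
  obtain ⟨n, hn⟩ : ∃ n : ℕ, 1 / 2 < q ^ n * ENNReal.ofReal α := by
    have hq : 1 < q := ENNReal.lt_add_right ENNReal.one_ne_top (ENNReal.ofReal_pos.2 hc).ne'
    have := ENNReal.Tendsto.mul_const (ENNReal.tendsto_pow_atTop_nhds_top_iff.2 hq)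
      (Or.inr (ENNReal.ofReal_ne_top (r := α)))
    rw [ENNReal.top_mul (ENNReal.ofReal_pos.2 hα).ne'] at this
    exact (this.eventually_const_lt (by simp)).exists
  refine ⟨n * k, fun A hA hαA => lt_of_not_ge fun hle => hn.not_ge ?_⟩
  set u : ℕ → ℝ≥0∞ := fun m => ν (ballSmul ℓ (m * k) A)
  have hu : Monotone u := fun i j hij =>
    measure_mono (ballSmul_subset_ballSmul (Nat.mul_le_mul_right k hij) A)
  have hαu (m : ℕ) : ENNReal.ofReal α ≤ u m := hαA.trans (measure_mono (subset_ballSmul hl1 _ A))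
  have hstep (m : ℕ) (hm : u m ≤ 1 / 2) : q * u m ≤ u (m + 1) := by
    refine (hexp _ (measurableSet_ballSmul hmeas _ hA) (hαu m) hm).le.trans (measure_mono ?_)
    simpa only [add_mul, one_mul, add_comm] using ballSmul_ballSmul_subset hlsub k (m * k) A
  calc q ^ n * ENNReal.ofReal α ≤ q ^ n * u 0 := by gcongr; exact hαu 0
    _ ≤ u n := pow_mul_le_of_mul_le_succ hu hstep n hle
    _ ≤ 1 / 2 := hle

lemma exists_measure_compl_ballSmul_lt [IsProbabilityMeasure ν] (hlinv : ∀ γ : Γ, ℓ γ⁻¹ = ℓ γ) :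
    ∃ K : ℕ, ∀ A : Set X, MeasurableSet A → ENNReal.ofReal α ≤ ν A →
      ν (ballSmul ℓ K A)ᶜ < ENNReal.ofReal α := by
  obtain ⟨N, hN⟩ := exists_half_lt_measure_ballSmul hl1 hlsub hmeas hexp hα hc
  refine ⟨N + N, fun A hA hαA => ?_⟩
  set S := ballSmul ℓ N A
  have hS : MeasurableSet S := measurableSet_ballSmul hmeas N hA
  refine (measure_mono (Set.compl_subset_compl.2 (ballSmul_ballSmul_subset hlsub N N A))).trans_lt
    (lt_of_not_ge fun hαT => ?_)
  -- the `N`-neighbourhood of `(B_N S)ᶜ` avoids `S`, so `S` and `Sᶜ` would both have measure `> 1/2`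
  have hSc : 1 / 2 < ν Sᶜ :=
    (hN _ (measurableSet_ballSmul hmeas N hS).compl hαT).trans_le
      (measure_mono (ballSmul_compl_ballSmul_subset hlinv N S))
  have := ENNReal.add_lt_add (hN A hA hαA) hSc
  rw [ENNReal.add_halves, measure_add_measure_compl hS, measure_univ] at this
  exact this.false

end Expansion

section CutNorm

variable {X : Type*} [MeasurableSpace X] {ν : Measure X}

lemma abs_integral_le_norm_mul_sqrt_measureReal [IsFiniteMeasure ν] {C : Set X}
    (hC : MeasurableSet C) {f : Lp ℝ 2 ν} (hf : ∀ᵐ x ∂ν, x ∉ C → f x = 0) :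
    |∫ x, f x ∂ν| ≤ ‖f‖ * √(ν.real C) := by
  rw [← setIntegral_eq_integral_of_ae_compl_eq_zero hf,
    ← L2.inner_indicatorConstLp_one (𝕜 := ℝ) hC (measure_ne_top ν C) f]
  refine (abs_real_inner_le_norm _ _).trans_eq ?_
  rw [norm_indicatorConstLp two_ne_zero ENNReal.ofNat_ne_top, mul_comm]
  simp [Real.sqrt_eq_rpow]

variable {P : Lp ℝ 2 ν →L[ℝ] Lp ℝ 2 ν} (hP : ∀ f : Lp ℝ 2 ν, ∀ᵐ x ∂ν, P f x = ∫ y, f y ∂ν)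
  {A C : Set X} (hA : MeasurableSet A) (hC : MeasurableSet C)
include hP hA

lemma eLpNorm_indicator_averaging (f : Lp ℝ 2 ν) :
    (eLpNorm (A.indicator (fun x => P f x)) 2 ν).toReal = |∫ x, f x ∂ν| * √(ν.real A) := by
  have hconst : A.indicator (fun x => P f x) =ᵐ[ν] A.indicator (fun _ => ∫ y, f y ∂ν) :=
    (hP f).mono fun x hx => by simp only [Set.indicator, hx]
  rw [eLpNorm_congr_ae hconst, eLpNorm_indicator_const hA two_ne_zero ENNReal.ofNat_ne_top,
    ENNReal.toReal_mul, ← ENNReal.toReal_rpow]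
  simp [Real.sqrt_eq_rpow, measureReal_def]

include hC

lemma cutNorm_averaging [IsFiniteMeasure ν] : cutNorm P A C = √(ν.real A * ν.real C) := by
  -- the normalised indicator of `C` attains the bound (it is `0` when `ν C = 0`)
  set g := indicatorConstLp 2 hC (measure_ne_top ν C) (√(ν.real C))⁻¹
  have hg : ‖g‖ ≤ 1 := by
    rw [norm_indicatorConstLp two_ne_zero ENNReal.ofNat_ne_top, ENNReal.toReal_ofNat,
      ← Real.sqrt_eq_rpow, norm_inv, Real.norm_of_nonneg (Real.sqrt_nonneg _)]
    exact inv_mul_le_one_of_le₀ le_rfl (Real.sqrt_nonneg _)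
  have hgval : (eLpNorm (A.indicator (fun x => P g x)) 2 ν).toReal = √(ν.real A * ν.real C) := by
    rw [eLpNorm_indicator_averaging hP hA, integral_indicatorConstLp, smul_eq_mul,
      ← div_eq_mul_inv, Real.div_sqrt, abs_of_nonneg (Real.sqrt_nonneg _),
      Real.sqrt_mul' _ measureReal_nonneg, mul_comm]
  refine IsGreatest.csSup_eq ⟨⟨g, ⟨hg, indicatorConstLp_coeFn_notMem⟩, hgval⟩, ?_⟩
  rintro _ ⟨f, ⟨hf, hfC⟩, rfl⟩
  dsimp only
  rw [eLpNorm_indicator_averaging hP hA, Real.sqrt_mul measureReal_nonneg, mul_comm]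
  gcongr
  exact (abs_integral_le_norm_mul_sqrt_measureReal hC hfC).trans
    (mul_le_of_le_one_left (Real.sqrt_nonneg _) hf)

end CutNorm

section Averaging

variable {Γ X : Type*} [Group Γ] [Countable Γ] [MulAction Γ X] [MeasurableSpace X] {ℓ : Γ → ℕ}
  (hmeas : ∀ γ : Γ, Measurable (fun x : X => γ • x)) {ν : Measure X} [IsProbabilityMeasure ν]
  {P : Lp ℝ 2 ν →L[ℝ] Lp ℝ 2 ν} (hP : ∀ f : Lp ℝ 2 ν, ∀ᵐ x ∂ν, P f x = ∫ y, f y ∂ν)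
include hmeas hP

lemma averaging_quasiLocal_of_asymptoticallyExpanding (hl1 : ℓ 1 = 0) (hlinv : ∀ γ : Γ, ℓ γ⁻¹ = ℓ γ)
    (hlsub : ∀ γ₁ γ₂ : Γ, ℓ (γ₁ * γ₂) ≤ ℓ γ₁ + ℓ γ₂) (h : AsymptoticallyExpanding ℓ ν) :
    QuasiLocal ℓ ν P := by
  obtain ⟨c, k, hc, hexp⟩ := h
  intro ε hε
  set α := min (ε ^ 2) (1 / 2)
  have hα : α ∈ Set.Ioc (0 : ℝ) (1 / 2) := ⟨lt_min (by positivity) one_half_pos, min_le_right _ _⟩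
  obtain ⟨K, hK⟩ := exists_measure_compl_ballSmul_lt hl1 hlsub hmeas (hexp α hα) hα.1 (hc α hα)
    hlinv
  refine ⟨K, fun A C hA hC hAC => ?_⟩
  have hsmall : ν.real A * ν.real C < α := by
    by_cases hαA : ENNReal.ofReal α ≤ ν A
    · have hCK : ν C ≤ ν (ballSmul ℓ K A)ᶜ :=
        measure_mono_ae (ae_le_set.2 (by rwa [Set.sdiff_compl, Set.inter_comm]))
      have hνC := (ENNReal.lt_ofReal_iff_toReal_lt (measure_ne_top ν C)).1
        (hCK.trans_lt (hK A hA hαA))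
      exact (mul_le_of_le_one_left measureReal_nonneg measureReal_le_one).trans_lt hνC
    · have hνA := (ENNReal.lt_ofReal_iff_toReal_lt (measure_ne_top ν A)).1 (not_le.1 hαA)
      exact (mul_le_of_le_one_right measureReal_nonneg measureReal_le_one).trans_lt hνA
  rw [cutNorm_averaging hP hA hC, Real.sqrt_lt' hε]
  exact hsmall.trans_le (min_le_left _ _)

lemma asymptoticallyExpanding_of_averaging_quasiLocal (h : QuasiLocal ℓ ν P) :
    AsymptoticallyExpanding ℓ ν := by
  choose! k hk using h
  refine ⟨fun _ => 1 / 2, fun α => k (α / 2), fun _ _ => one_half_pos,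
    fun α hα A hA hαA hA2 => ?_⟩
  set B := ballSmul ℓ (k (α / 2)) A
  have hB : MeasurableSet B := measurableSet_ballSmul hmeas _ hA
  have hcut := hk (α / 2) (half_pos hα.1) A Bᶜ hA hB.compl
    (by rw [Set.inter_compl_self, measure_empty])
  rw [cutNorm_averaging hP hA hB.compl, Real.sqrt_lt' (half_pos hα.1)] at hcut
  have hαA' : α ≤ ν.real A := (ENNReal.ofReal_le_iff_le_toReal (measure_ne_top _ _)).1 hαA
  have hA2' : ν.real A ≤ 1 / 2 := by
    simpa [measureReal_def] using ENNReal.toReal_mono (by simp) hA2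
  have hBc : ν.real Bᶜ < α / 4 := by
    refine lt_of_mul_lt_mul_left ?_ hα.1.le
    calc α * ν.real Bᶜ ≤ ν.real A * ν.real Bᶜ := by gcongr
      _ < (α / 2) ^ 2 := hcut
      _ = α * (α / 4) := by ring
  have hBBc := measureReal_add_measureReal_compl (μ := ν) hB
  rw [probReal_univ] at hBBc
  rw [← ENNReal.toReal_lt_toReal (by finiteness) (measure_ne_top _ _), ENNReal.toReal_mul,
    ENNReal.toReal_add ENNReal.one_ne_top ENNReal.ofReal_ne_top, ENNReal.toReal_one,
    ENNReal.toReal_ofReal one_half_pos.le]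
  change (1 + 1 / 2) * ν.real A < ν.real B
  linarith [hα.2]

end Averaging

theorem asymptoticallyExpanding_iff_averaging_quasiLocal_general {Γ X : Type*} [Group Γ]
    [Countable Γ] [MulAction Γ X] [MeasurableSpace X]
    (ℓ : Γ → ℕ) (hl0 : ∀ γ : Γ, ℓ γ = 0 ↔ γ = 1) (hlinv : ∀ γ : Γ, ℓ γ⁻¹ = ℓ γ)
    (hlsub : ∀ γ₁ γ₂ : Γ, ℓ (γ₁ * γ₂) ≤ ℓ γ₁ + ℓ γ₂)
    (ν : Measure X) [IsProbabilityMeasure ν]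
    (hmeas : ∀ γ : Γ, Measurable (fun x : X => γ • x))
    (P : Lp ℝ 2 ν →L[ℝ] Lp ℝ 2 ν)
    (hP : ∀ f : Lp ℝ 2 ν, ∀ᵐ x ∂ν, P f x = ∫ y, f y ∂ν) :
    AsymptoticallyExpanding ℓ ν ↔ QuasiLocal ℓ ν P :=
  ⟨averaging_quasiLocal_of_asymptoticallyExpanding hmeas hP ((hl0 1).2 rfl) hlinv hlsub,
    asymptoticallyExpanding_of_averaging_quasiLocal hmeas hP⟩

/-- **Proposition 4.8.** A measurable action `ρ : Γ ↷ (X,ν)` on a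
probability space is asymptotically expanding in measure if and only if the averaging
projection `P_X` on `L²(X,ν)` is `ρ`-quasi-local. -/
theorem asymptoticallyExpanding_iff_averaging_quasiLocal {Γ X : Type*} [Group Γ]
    [Countable Γ] [MulAction Γ X] [MeasurableSpace X]
    (ℓ : Γ → ℕ) (hl0 : ∀ γ : Γ, ℓ γ = 0 ↔ γ = 1) (hlinv : ∀ γ : Γ, ℓ γ⁻¹ = ℓ γ)
    (hlsub : ∀ γ₁ γ₂ : Γ, ℓ (γ₁ * γ₂) ≤ ℓ γ₁ + ℓ γ₂)
    (hlprop : ∀ k : ℕ, {γ : Γ | ℓ γ ≤ k}.Finite)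
    (ν : Measure X) [IsProbabilityMeasure ν]
    (hmeas : ∀ γ : Γ, Measurable (fun x : X => γ • x))
    (P : Lp ℝ 2 ν →L[ℝ] Lp ℝ 2 ν)
    (hP : ∀ f : Lp ℝ 2 ν, ∀ᵐ x ∂ν, P f x = ∫ y, f y ∂ν) :
    AsymptoticallyExpanding ℓ ν ↔ QuasiLocal ℓ ν P :=
  asymptoticallyExpanding_iff_averaging_quasiLocal_general ℓ hl0 hlinv hlsub ν hmeas P hP
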